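/- arXiv:2002.06332 — 2 statements merged into one kernel-verified Lean document; each statement's English description precedes it below -/
import Mathlib

section
/- The quantum relative entropy between the best possible guessed state and the final product Gibbs state equals D = −ln(Z̃/Z_St) − β Q̃, where Q̃ is the guessed quantum heat. -/
/-!
The state `Θ` has eigenvalues `λ i j = p i * r j`, where `r` are the Boltzmann weights of the
bath spectrum, so its entropy term splits as
`Σ p ln p + Σ r ln r = (-β ⟨E⟩_p - ln Z̃) + (-β Tr[H_B τ_B] - ln Z_B)`.
Tracing out the bath turns `Tr[(H_St ⊗ 1) Θ]` into `Σ p i * Tr[H_St Φ(|e_i⟩⟨e_i|)] = ⟨E⟩_p`,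
so the `⟨E⟩_p` and `ln Z_B` terms cancel and `ln Z_St - ln Z̃ - β Q̃` remains.
-/

open Matrix Kronecker BigOperators Finset

noncomputable section

/-- Partial trace over the bath (second tensor factor). -/
def ptraceB {n m : ℕ} (X : Matrix (Fin n × Fin m) (Fin n × Fin m) ℂ) :
    Matrix (Fin n) (Fin n) ℂ :=
  Matrix.of fun i i' => ∑ j, X (i, j) (i', j)

/-- Outer product `|v⟩⟨v|`. -/
def outer {k : ℕ} (v : Fin k → ℂ) : Matrix (Fin k) (Fin k) ℂ :=
  Matrix.vecMulVec v (star v)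

/-- Partition function `Z = Tr exp (−β H)` (real part of the trace). -/
def Zpart (β : ℝ) {k : ℕ} (H : Matrix (Fin k) (Fin k) ℂ) : ℝ :=
  (NormedSpace.exp ((-β) • H)).trace.re

/-- Gibbs state `exp (−β H) / Z`. -/
def gibbs (β : ℝ) {k : ℕ} (H : Matrix (Fin k) (Fin k) ℂ) : Matrix (Fin k) (Fin k) ℂ :=
  ((Zpart β H : ℂ)⁻¹) • NormedSpace.exp ((-β) • H)

/-- The channel `Φ(ρ) = Tr_B [U (ρ ⊗ τB) U†]`. -/
def channel {n m : ℕ} (U : Matrix (Fin n × Fin m) (Fin n × Fin m) ℂ)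
    (τB : Matrix (Fin m) (Fin m) ℂ) (ρ : Matrix (Fin n) (Fin n) ℂ) :
    Matrix (Fin n) (Fin n) ℂ :=
  ptraceB (U * (ρ ⊗ₖ τB) * Uᴴ)

namespace Matrix

variable {ι : Type*} [Fintype ι] [DecidableEq ι] {H F : Matrix ι ι ℂ} {f : ι → ι → ℂ} {q : ι → ℝ}

theorem transpose_of_conjTranspose_mul_self_eq_one
    (hf : ∀ j j', ∑ x, (starRingEnd ℂ) (f j x) * f j' x = if j = j' then 1 else 0) :
    ((of f)ᵀ)ᴴ * (of f)ᵀ = 1 := by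
  ext j j'
  simpa [mul_apply, one_apply] using hf j j'

theorem eq_transpose_of_mul_diagonal_mul_conjTranspose
    (hf : ∀ j j', ∑ x, (starRingEnd ℂ) (f j x) * f j' x = if j = j' then 1 else 0)
    (hfeig : ∀ j, H *ᵥ f j = (q j : ℂ) • f j) :
    H = (of f)ᵀ * diagonal (fun j => (q j : ℂ)) * ((of f)ᵀ)ᴴ := by
  have hHF : H * (of f)ᵀ = (of f)ᵀ * diagonal (fun j => (q j : ℂ)) := by
    ext x j
    rw [mul_diagonal]
    simpa [mul_apply, mulVec, dotProduct, mul_comm] using congrFun (hfeig j) x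
  rw [← hHF, Matrix.mul_assoc, mul_eq_one_comm.mp (transpose_of_conjTranspose_mul_self_eq_one hf),
    Matrix.mul_one]

theorem exp_smul_of_eq_mul_diagonal_mul_conjTranspose (hF : Fᴴ * F = 1)
    (hH : H = F * diagonal (fun j => (q j : ℂ)) * Fᴴ) (t : ℝ) :
    NormedSpace.exp (t • H) = F * diagonal (fun j => (Real.exp (t * q j) : ℂ)) * Fᴴ := by
  have hinv : F⁻¹ = Fᴴ := inv_eq_left_inv hF
  have hunit : IsUnit F := ⟨⟨F, Fᴴ, mul_eq_one_comm.mp hF, hF⟩, rfl⟩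
  have hdiag : t • diagonal (fun j => (q j : ℂ)) = diagonal (fun j => ((t * q j : ℝ) : ℂ)) := by
    rw [← diagonal_smul]
    congr 1
    ext j
    simp
  rw [hH, ← Matrix.smul_mul, ← Matrix.mul_smul, hdiag, ← hinv, exp_conj _ _ hunit, exp_diagonal]
  congr 3
  ext j
  simp [Pi.coe_exp, ← Complex.exp_eq_exp_ℂ, Complex.ofReal_exp]

theorem trace_exp_smul_of_eq_mul_diagonal_mul_conjTranspose (hF : Fᴴ * F = 1)
    (hH : H = F * diagonal (fun j => (q j : ℂ)) * Fᴴ) (t : ℝ) :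
    (NormedSpace.exp (t • H)).trace = ((∑ j, Real.exp (t * q j) : ℝ) : ℂ) := by
  rw [exp_smul_of_eq_mul_diagonal_mul_conjTranspose hF hH, trace_mul_cycle, hF, Matrix.one_mul,
    trace_diagonal]
  push_cast
  rfl

theorem trace_mul_exp_smul_of_eq_mul_diagonal_mul_conjTranspose (hF : Fᴴ * F = 1)
    (hH : H = F * diagonal (fun j => (q j : ℂ)) * Fᴴ) (t : ℝ) :
    (H * NormedSpace.exp (t • H)).trace = ((∑ j, q j * Real.exp (t * q j) : ℝ) : ℂ) := by
  have hprod : ∀ D D' : Matrix ι ι ℂ, F * D * Fᴴ * (F * D' * Fᴴ) = F * (D * D') * Fᴴ := by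
    intro D D'
    simp only [Matrix.mul_assoc]
    rw [← Matrix.mul_assoc Fᴴ F, hF, Matrix.one_mul]
  rw [exp_smul_of_eq_mul_diagonal_mul_conjTranspose hF hH]
  conv_lhs => rw [hH]
  rw [hprod, trace_mul_cycle, hF, Matrix.one_mul, diagonal_mul_diagonal, trace_diagonal]
  push_cast
  rfl

end Matrix

def boltzmannWeight {ι : Type*} [Fintype ι] (β : ℝ) (x : ι → ℝ) (i : ι) : ℝ :=
  Real.exp (-(β * x i)) / ∑ j, Real.exp (-(β * x j))

section BoltzmannWeight

variable {ι : Type*} [Fintype ι] [Nonempty ι] (β : ℝ) (x : ι → ℝ)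

theorem sum_exp_neg_mul_pos : 0 < ∑ j, Real.exp (-(β * x j)) :=
  Finset.sum_pos (fun _ _ => Real.exp_pos _) Finset.univ_nonempty

theorem sum_boltzmannWeight : ∑ i, boltzmannWeight β x i = 1 := by
  simp only [boltzmannWeight, ← Finset.sum_div]
  exact div_self (sum_exp_neg_mul_pos β x).ne'

theorem log_boltzmannWeight (i : ι) :
    Real.log (boltzmannWeight β x i) = -(β * x i) - Real.log (∑ j, Real.exp (-(β * x j))) := by
  rw [boltzmannWeight, Real.log_div (Real.exp_pos _).ne' (sum_exp_neg_mul_pos β x).ne',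
    Real.log_exp]

theorem sum_boltzmannWeight_mul_log :
    ∑ i, boltzmannWeight β x i * Real.log (boltzmannWeight β x i) =
      -(β * ∑ i, boltzmannWeight β x i * x i) - Real.log (∑ j, Real.exp (-(β * x j))) := by
  simp only [log_boltzmannWeight, mul_sub, Finset.sum_sub_distrib, ← Finset.sum_mul,
    sum_boltzmannWeight, one_mul, Finset.mul_sum, mul_neg, Finset.sum_neg_distrib, mul_left_comm]

end BoltzmannWeight

theorem sum_sum_mul_mul_log_mul {ι κ : Type*} [Fintype ι] [Fintype κ] {p : ι → ℝ} {r : κ → ℝ}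
    (hp : ∑ i, p i = 1) (hr : ∑ j, r j = 1) :
    ∑ i, ∑ j, p i * r j * Real.log (p i * r j) =
      ∑ i, p i * Real.log (p i) + ∑ j, r j * Real.log (r j) := by
  have hterm : ∀ i j, p i * r j * Real.log (p i * r j) =
      r j * (p i * Real.log (p i)) + p i * (r j * Real.log (r j)) := by
    intro i j
    have := Real.negMulLog_mul (p i) (r j)
    simp only [Real.negMulLog] at this
    linarith
  simp only [hterm, Finset.sum_add_distrib, ← Finset.sum_mul, ← Finset.mul_sum, hp, hr, one_mul]

section PartitionFunction

variable {k : ℕ} {H F : Matrix (Fin k) (Fin k) ℂ} {q : Fin k → ℝ}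

theorem Zpart_eq_sum (hF : Fᴴ * F = 1) (hH : H = F * diagonal (fun j => (q j : ℂ)) * Fᴴ)
    (β : ℝ) : Zpart β H = ∑ j, Real.exp (-(β * q j)) := by
  rw [Zpart, trace_exp_smul_of_eq_mul_diagonal_mul_conjTranspose hF hH, Complex.ofReal_re]
  simp only [neg_mul]

theorem Zpart_pos (hF : Fᴴ * F = 1) (hH : H = F * diagonal (fun j => (q j : ℂ)) * Fᴴ)
    (hk : 0 < k) (β : ℝ) : 0 < Zpart β H := by
  have : Nonempty (Fin k) := ⟨⟨0, hk⟩⟩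
  rw [Zpart_eq_sum hF hH]
  exact sum_exp_neg_mul_pos β q

theorem Matrix.IsHermitian.Zpart_pos (hH : H.IsHermitian) (hk : 0 < k) (β : ℝ) :
    0 < Zpart β H :=
  _root_.Zpart_pos (Unitary.coe_star_mul_self hH.eigenvectorUnitary) hH.spectral_theorem hk β

theorem re_trace_mul_gibbs (hF : Fᴴ * F = 1) (hH : H = F * diagonal (fun j => (q j : ℂ)) * Fᴴ)
    (β : ℝ) : ((H * gibbs β H).trace).re = ∑ j, boltzmannWeight β q j * q j := by
  rw [gibbs, Matrix.mul_smul, trace_smul,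
    trace_mul_exp_smul_of_eq_mul_diagonal_mul_conjTranspose hF hH, Zpart_eq_sum hF hH, smul_eq_mul,
    ← Complex.ofReal_inv, ← Complex.ofReal_mul, Complex.ofReal_re, Finset.mul_sum]
  refine Finset.sum_congr rfl fun j _ => ?_
  rw [boltzmannWeight, neg_mul]
  ring

end PartitionFunction

theorem trace_kronecker_one_mul {n m : ℕ} (A : Matrix (Fin n) (Fin n) ℂ)
    (X : Matrix (Fin n × Fin m) (Fin n × Fin m) ℂ) :
    ((A ⊗ₖ (1 : Matrix (Fin m) (Fin m) ℂ)) * X).trace = (A * ptraceB X).trace := by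
  simp only [trace, Matrix.diag, mul_apply, ptraceB, of_apply, Fintype.sum_prod_type,
    kroneckerMap_apply, one_apply, mul_ite, mul_one, mul_zero, ite_mul, zero_mul, Finset.sum_ite_eq,
    Finset.mul_sum, Finset.mem_univ, if_true]
  exact Finset.sum_congr rfl fun i _ => Finset.sum_comm

theorem re_trace_kronecker_one_mul_sum_smul {n m : ℕ} {ι : Type*} [Fintype ι]
    (A : Matrix (Fin n) (Fin n) ℂ) (U : Matrix (Fin n × Fin m) (Fin n × Fin m) ℂ)
    (τ : Matrix (Fin m) (Fin m) ℂ) (ρ : ι → Matrix (Fin n) (Fin n) ℂ) (p : ι → ℝ) :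
    (((A ⊗ₖ (1 : Matrix (Fin m) (Fin m) ℂ)) * ∑ i, (p i : ℂ) • (U * (ρ i ⊗ₖ τ) * Uᴴ)).trace).re =
      ∑ i, p i * ((A * channel U τ (ρ i)).trace).re := by
  simp only [Finset.mul_sum, Matrix.mul_smul, trace_sum, trace_smul, smul_eq_mul, Complex.re_sum,
    Complex.re_ofReal_mul, trace_kronecker_one_mul, channel]

theorem relative_entropy_guessed_heat_general
    (n m : ℕ) (hn : 1 ≤ n) (hm : 1 ≤ m)
    (β : ℝ)
    (HSt : Matrix (Fin n) (Fin n) ℂ)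
    (hHSt : HSt.IsHermitian)
    (HB : Matrix (Fin m) (Fin m) ℂ)
    (e : Fin n → Fin n → ℂ)
    (f : Fin m → Fin m → ℂ) (q : Fin m → ℝ)
    (hf : ∀ j j', ∑ x, (starRingEnd ℂ) (f j x) * f j' x = if j = j' then 1 else 0)
    (hfeig : ∀ j, HB *ᵥ f j = (q j : ℂ) • f j)
    (U : Matrix (Fin n × Fin m) (Fin n × Fin m) ℂ)
    (E : Fin n → ℝ)
    (hE : ∀ i, E i = ((HSt * channel U (gibbs β HB) (outer (e i))).trace).re)
    (Zt : ℝ) (hZt : Zt = ∑ i, Real.exp (-(β * E i)))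
    (p : Fin n → ℝ) (hp : ∀ i, p i = Real.exp (-(β * E i)) / Zt)
    (Θ : Matrix (Fin n × Fin m) (Fin n × Fin m) ℂ)
    (hΘ : Θ = ∑ i, (p i : ℂ) • (U * (outer (e i) ⊗ₖ gibbs β HB) * Uᴴ))
    (lam : Fin n → Fin m → ℝ)
    (hlam : ∀ i j, lam i j = p i * Real.exp (-(β * q j)) / Zpart β HB)
    (Qg : ℝ)
    (hQg : Qg = ((HB * gibbs β HB).trace).re
      - ((((1 : Matrix (Fin n) (Fin n) ℂ) ⊗ₖ HB) * Θ).trace).re)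
    (D : ℝ)
    (hD : D = (∑ i, ∑ j, lam i j * Real.log (lam i j))
      + β * (((HSt ⊗ₖ (1 : Matrix (Fin m) (Fin m) ℂ)) * Θ).trace).re
      + β * ((((1 : Matrix (Fin n) (Fin n) ℂ) ⊗ₖ HB) * Θ).trace).re
      + Real.log (Zpart β HSt * Zpart β HB)) :
    D = -Real.log (Zt / Zpart β HSt) - β * Qg := by
  have : Nonempty (Fin n) := ⟨⟨0, hn⟩⟩
  have : Nonempty (Fin m) := ⟨⟨0, hm⟩⟩
  have hFB := transpose_of_conjTranspose_mul_self_eq_one hf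
  have hHB := eq_transpose_of_mul_diagonal_mul_conjTranspose hf hfeig
  have hZB := Zpart_eq_sum hFB hHB β
  obtain rfl : p = boltzmannWeight β E := funext fun i => by rw [hp, hZt, boltzmannWeight]
  have hlam_mul : ∀ i j, lam i j = boltzmannWeight β E i * boltzmannWeight β q j := fun i j => by
    rw [hlam, hZB, mul_div_assoc]; rfl
  have hentropy : ∑ i, ∑ j, lam i j * Real.log (lam i j) =
      (-(β * ∑ i, boltzmannWeight β E i * E i) - Real.log Zt) +
        (-(β * ∑ j, boltzmannWeight β q j * q j) - Real.log (Zpart β HB)) := by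
    simp only [hlam_mul]
    rw [sum_sum_mul_mul_log_mul (sum_boltzmannWeight β E) (sum_boltzmannWeight β q),
      sum_boltzmannWeight_mul_log, sum_boltzmannWeight_mul_log, hZt, hZB]
  have hsystem : (((HSt ⊗ₖ (1 : Matrix (Fin m) (Fin m) ℂ)) * Θ).trace).re =
      ∑ i, boltzmannWeight β E i * E i := by
    rw [hΘ, re_trace_kronecker_one_mul_sum_smul]
    simp only [← hE]
  have hZt_pos : 0 < Zt := hZt ▸ sum_exp_neg_mul_pos β E
  rw [hD, hQg, hentropy, hsystem, re_trace_mul_gibbs hFB hHB,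
    Real.log_mul (hHSt.Zpart_pos hn β).ne' (Zpart_pos hFB hHB hm β).ne',
    Real.log_div hZt_pos.ne' (hHSt.Zpart_pos hn β).ne']
  ring

theorem relative_entropy_guessed_heat
    (n m : ℕ) (hn : 1 ≤ n) (hm : 1 ≤ m)
    (β : ℝ) (hβ : 0 < β)
    (HS0 HSt : Matrix (Fin n) (Fin n) ℂ)
    (hHS0 : HS0.IsHermitian) (hHSt : HSt.IsHermitian)
    (HB : Matrix (Fin m) (Fin m) ℂ) (hHB : HB.IsHermitian)
    (e : Fin n → Fin n → ℂ) (ε : Fin n → ℝ)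
    (he : ∀ i i', ∑ x, (starRingEnd ℂ) (e i x) * e i' x = if i = i' then 1 else 0)
    (heig : ∀ i, HS0 *ᵥ e i = (ε i : ℂ) • e i)
    (f : Fin m → Fin m → ℂ) (q : Fin m → ℝ)
    (hf : ∀ j j', ∑ x, (starRingEnd ℂ) (f j x) * f j' x = if j = j' then 1 else 0)
    (hfeig : ∀ j, HB *ᵥ f j = (q j : ℂ) • f j)
    (U : Matrix (Fin n × Fin m) (Fin n × Fin m) ℂ)
    (hU : U ∈ Matrix.unitaryGroup (Fin n × Fin m) ℂ)
    (E : Fin n → ℝ)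
    (hE : ∀ i, E i = ((HSt * channel U (gibbs β HB) (outer (e i))).trace).re)
    (Zt : ℝ) (hZt : Zt = ∑ i, Real.exp (-(β * E i)))
    (p : Fin n → ℝ) (hp : ∀ i, p i = Real.exp (-(β * E i)) / Zt)
    (Θ : Matrix (Fin n × Fin m) (Fin n × Fin m) ℂ)
    (hΘ : Θ = ∑ i, (p i : ℂ) • (U * (outer (e i) ⊗ₖ gibbs β HB) * Uᴴ))
    (lam : Fin n → Fin m → ℝ)
    (hlam : ∀ i j, lam i j = p i * Real.exp (-(β * q j)) / Zpart β HB)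
    (Qg : ℝ)
    (hQg : Qg = ((HB * gibbs β HB).trace).re
      - ((((1 : Matrix (Fin n) (Fin n) ℂ) ⊗ₖ HB) * Θ).trace).re)
    (D : ℝ)
    (hD : D = (∑ i, ∑ j, lam i j * Real.log (lam i j))
      + β * (((HSt ⊗ₖ (1 : Matrix (Fin m) (Fin m) ℂ)) * Θ).trace).re
      + β * ((((1 : Matrix (Fin n) (Fin n) ℂ) ⊗ₖ HB) * Θ).trace).re
      + Real.log (Zpart β HSt * Zpart β HB)) :
    D = -Real.log (Zt / Zpart β HSt) - β * Qg :=
  relative_entropy_guessed_heat_general n m hn hm β HSt hHSt HB e f q hf hfeig U E hE Zt hZt p hp Θ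
    hΘ lam hlam Qg hQg D hD
end
end

section
/- (Exact quantum work expectation from the two-time measurement scheme.) Σ_{i,j,k,l} (exp(−β ε_i)/Z_S0)·(exp(−β q_j)/Z_B)·|⟨e'_k ⊗ f_l, U (e_i ⊗ f_j)⟩|²·((ε'_k + q_l) − (ε_i + q_j)) = Re Tr[(H_St ⊗ 1_m + 1_n ⊗ H_B) · U (τ_S0 ⊗ τ_B) U†] − Re Tr[H_S0 τ_S0] − Re Tr[H_B τ_B]. -/
open Matrix Kronecker BigOperators Finset

noncomputable section

/-! ### Auxiliary spectral lemmas -/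

section Aux
variable {k : ℕ}

/-- eigenvector matrix: columns are the `e i`. -/
def evmat (e : Fin k → Fin k → ℂ) : Matrix (Fin k) (Fin k) ℂ :=
  Matrix.of fun x i => e i x

lemma evmat_unit (e : Fin k → Fin k → ℂ)
    (he : ∀ i i', ∑ x, (starRingEnd ℂ) (e i x) * e i' x = if i = i' then 1 else 0) :
    (evmat e)ᴴ * (evmat e) = 1 := by
  ext i i'
  simp [Matrix.mul_apply, Matrix.conjTranspose_apply, evmat, he, Matrix.one_apply]

lemma evmat_unit' (e : Fin k → Fin k → ℂ)
    (he : ∀ i i', ∑ x, (starRingEnd ℂ) (e i x) * e i' x = if i = i' then 1 else 0) :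
    (evmat e) * (evmat e)ᴴ = 1 :=
  mul_eq_one_comm.mp (evmat_unit e he)

lemma spectral_rep (H : Matrix (Fin k) (Fin k) ℂ) (e : Fin k → Fin k → ℂ) (ε : Fin k → ℝ)
    (he : ∀ i i', ∑ x, (starRingEnd ℂ) (e i x) * e i' x = if i = i' then 1 else 0)
    (heig : ∀ i, H *ᵥ e i = (ε i : ℂ) • e i) :
    H = evmat e * Matrix.diagonal (fun i => (ε i : ℂ)) * (evmat e)ᴴ := by
  have h1 : H * evmat e = evmat e * Matrix.diagonal (fun i => (ε i : ℂ)) := by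
    ext x i
    have h := congrFun (heig i) x
    simp only [Matrix.mulVec, dotProduct, Pi.smul_apply, smul_eq_mul] at h
    rw [Matrix.mul_diagonal, Matrix.mul_apply]
    simp only [evmat, Matrix.of_apply]
    rw [h]; ring
  calc H = H * (evmat e * (evmat e)ᴴ) := by rw [evmat_unit' e he, mul_one]
    _ = (H * evmat e) * (evmat e)ᴴ := by rw [mul_assoc]
    _ = _ := by rw [h1]

lemma exp_spectral (β : ℝ) (H : Matrix (Fin k) (Fin k) ℂ) (e : Fin k → Fin k → ℂ) (ε : Fin k → ℝ)
    (he : ∀ i i', ∑ x, (starRingEnd ℂ) (e i x) * e i' x = if i = i' then 1 else 0)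
    (heig : ∀ i, H *ᵥ e i = (ε i : ℂ) • e i) :
    NormedSpace.exp ((-β) • H)
      = evmat e * Matrix.diagonal (fun i => (Real.exp (-(β * ε i)) : ℂ)) * (evmat e)ᴴ := by
  have hrep := spectral_rep H e ε he heig
  have hinv : (evmat e)⁻¹ = (evmat e)ᴴ := Matrix.inv_eq_right_inv (evmat_unit' e he)
  have hU : IsUnit (evmat e) := (Matrix.isUnit_iff_isUnit_det _).mpr (Matrix.isUnit_det_of_right_inverse (evmat_unit' e he))
  have hd : ((-β : ℝ) • Matrix.diagonal (fun i => (ε i : ℂ)))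
      = Matrix.diagonal (fun i => ((-(β * ε i) : ℝ) : ℂ)) := by
    rw [← Matrix.diagonal_smul]
    have hfn : ((-β : ℝ) • fun i => ((ε i : ℂ))) = (fun i => ((-(β * ε i) : ℝ) : ℂ)) := by
      funext i
      show (-β : ℝ) • (ε i : ℂ) = ((-(β * ε i) : ℝ) : ℂ)
      rw [Complex.real_smul]; push_cast; ring
    rw [hfn]
  have hsm : (-β) • H
      = evmat e * Matrix.diagonal (fun i => ((-(β * ε i) : ℝ) : ℂ)) * (evmat e)⁻¹ := by
    rw [hinv, hrep, ← hd, Matrix.mul_smul, Matrix.smul_mul]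
  rw [hsm, Matrix.exp_conj _ _ hU, Matrix.exp_diagonal, hinv]
  have hfun : (NormedSpace.exp fun i => ((-(β * ε i) : ℝ) : ℂ))
      = fun i => ((Real.exp (-(β * ε i)) : ℝ) : ℂ) := by
    rw [Pi.exp_def]
    funext i
    rw [← Complex.exp_eq_exp_ℂ, Complex.ofReal_exp]
  rw [hfun]

end Aux

lemma trace_conj_diag {ι : Type*} [Fintype ι] [DecidableEq ι]
    (V : Matrix ι ι ℂ) (hV : Vᴴ * V = 1) (d : ι → ℂ) :
    (V * Matrix.diagonal d * Vᴴ).trace = ∑ i, d i := by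
  rw [Matrix.trace_mul_cycle, hV, one_mul, Matrix.trace_diagonal]

lemma conj_diag_mul {ι : Type*} [Fintype ι] [DecidableEq ι]
    (V : Matrix ι ι ℂ) (hV : Vᴴ * V = 1) (d c : ι → ℂ) :
    (V * Matrix.diagonal d * Vᴴ) * (V * Matrix.diagonal c * Vᴴ)
      = V * Matrix.diagonal (fun i => d i * c i) * Vᴴ := by
  have h : Matrix.diagonal d * Matrix.diagonal c = Matrix.diagonal (fun i => d i * c i) := by
    rw [Matrix.diagonal_mul_diagonal]
  calc (V * Matrix.diagonal d * Vᴴ) * (V * Matrix.diagonal c * Vᴴ)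
      = V * Matrix.diagonal d * (Vᴴ * V) * Matrix.diagonal c * Vᴴ := by
        simp only [mul_assoc]
    _ = V * (Matrix.diagonal d * Matrix.diagonal c) * Vᴴ := by
        rw [hV]; simp only [mul_assoc, one_mul]
    _ = _ := by rw [h]

lemma key_trace {ι : Type*} [Fintype ι] [DecidableEq ι]
    (W W' U : Matrix ι ι ℂ) (dg dc : ι → ℂ) :
    (W * Matrix.diagonal dg * Wᴴ * (U * (W' * Matrix.diagonal dc * W'ᴴ) * Uᴴ)).trace
      = ∑ u, ∑ v, dg u * dc v
          * ((Wᴴ * U * W') u v * (starRingEnd ℂ) ((Wᴴ * U * W') u v)) := by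
  set A : Matrix ι ι ℂ := Wᴴ * U * W' with hA
  have h1 : (W * Matrix.diagonal dg * Wᴴ * (U * (W' * Matrix.diagonal dc * W'ᴴ) * Uᴴ)).trace
      = ((A * Matrix.diagonal dc * Aᴴ) * Matrix.diagonal dg).trace := by
    rw [show W * Matrix.diagonal dg * Wᴴ * (U * (W' * Matrix.diagonal dc * W'ᴴ) * Uᴴ)
        = (W * Matrix.diagonal dg) * (Wᴴ * (U * (W' * Matrix.diagonal dc * W'ᴴ) * Uᴴ)) from by
      simp only [mul_assoc]]
    rw [Matrix.trace_mul_comm]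
    congr 1
    rw [hA, Matrix.conjTranspose_mul, Matrix.conjTranspose_mul,
      Matrix.conjTranspose_conjTranspose]
    simp only [mul_assoc]
  rw [h1, Matrix.trace]
  refine Finset.sum_congr rfl fun u _ => ?_
  rw [Matrix.diag_apply, Matrix.mul_diagonal, Matrix.mul_apply]
  simp only [Matrix.mul_diagonal, Matrix.conjTranspose_apply]
  rw [Finset.sum_mul]
  refine Finset.sum_congr rfl fun v _ => ?_
  simp only [← Complex.star_def]
  ring

lemma kron_conjT {a b : ℕ} (A : Matrix (Fin a) (Fin a) ℂ) (B : Matrix (Fin b) (Fin b) ℂ) :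
    (A ⊗ₖ B)ᴴ = Aᴴ ⊗ₖ Bᴴ := by
  ext u v
  simp only [Matrix.conjTranspose_apply, Matrix.kroneckerMap_apply, star_mul']

lemma kron_conj_diag {a b : ℕ} (V1 : Matrix (Fin a) (Fin a) ℂ) (V2 : Matrix (Fin b) (Fin b) ℂ)
    (d1 : Fin a → ℂ) (d2 : Fin b → ℂ) :
    (V1 * Matrix.diagonal d1 * V1ᴴ) ⊗ₖ (V2 * Matrix.diagonal d2 * V2ᴴ)
      = (V1 ⊗ₖ V2) * Matrix.diagonal (fun u : Fin a × Fin b => d1 u.1 * d2 u.2)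
          * (V1 ⊗ₖ V2)ᴴ := by
  rw [kron_conjT, Matrix.mul_kronecker_mul, Matrix.mul_kronecker_mul,
    Matrix.diagonal_kronecker_diagonal]

/-! ### spectral consequences for `Zpart` / `gibbs` -/

section Spec
variable {k : ℕ} (β : ℝ) (H : Matrix (Fin k) (Fin k) ℂ) (e : Fin k → Fin k → ℂ) (ε : Fin k → ℝ)

lemma Zpart_eq
    (he : ∀ i i', ∑ x, (starRingEnd ℂ) (e i x) * e i' x = if i = i' then 1 else 0)
    (heig : ∀ i, H *ᵥ e i = (ε i : ℂ) • e i) :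
    Zpart β H = ∑ i, Real.exp (-(β * ε i)) := by
  rw [Zpart, exp_spectral β H e ε he heig, trace_conj_diag _ (evmat_unit e he)]
  rw [← Complex.ofReal_sum, Complex.ofReal_re]

lemma gibbs_rep
    (he : ∀ i i', ∑ x, (starRingEnd ℂ) (e i x) * e i' x = if i = i' then 1 else 0)
    (heig : ∀ i, H *ᵥ e i = (ε i : ℂ) • e i) :
    gibbs β H = evmat e
      * Matrix.diagonal (fun i => ((Real.exp (-(β * ε i)) / Zpart β H : ℝ) : ℂ))
      * (evmat e)ᴴ := by
  rw [gibbs, exp_spectral β H e ε he heig]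
  have h : evmat e * (((Zpart β H : ℂ)⁻¹)
        • Matrix.diagonal (fun i => (Real.exp (-(β * ε i)) : ℂ))) * (evmat e)ᴴ
      = ((Zpart β H : ℂ)⁻¹)
        • (evmat e * Matrix.diagonal (fun i => (Real.exp (-(β * ε i)) : ℂ)) * (evmat e)ᴴ) := by
    rw [Matrix.mul_smul, Matrix.smul_mul]
  rw [← h]
  congr 1
  congr 1
  rw [← Matrix.diagonal_smul]
  have hfn : ((Zpart β H : ℂ)⁻¹ • fun i => ((Real.exp (-(β * ε i)) : ℝ) : ℂ))
      = fun i => ((Real.exp (-(β * ε i)) / Zpart β H : ℝ) : ℂ) := by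
    funext i
    show (Zpart β H : ℂ)⁻¹ • ((Real.exp (-(β * ε i)) : ℝ) : ℂ)
        = ((Real.exp (-(β * ε i)) / Zpart β H : ℝ) : ℂ)
    rw [smul_eq_mul, Complex.ofReal_div, div_eq_mul_inv]
    ring
  rw [hfn]

lemma trace_H_gibbs
    (he : ∀ i i', ∑ x, (starRingEnd ℂ) (e i x) * e i' x = if i = i' then 1 else 0)
    (heig : ∀ i, H *ᵥ e i = (ε i : ℂ) • e i) :
    (H * gibbs β H).trace
      = ((∑ i, ε i * (Real.exp (-(β * ε i)) / Zpart β H) : ℝ) : ℂ) := by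
  have hg := gibbs_rep β H e ε he heig
  rw [hg]
  nth_rewrite 1 [spectral_rep H e ε he heig]
  rw [conj_diag_mul _ (evmat_unit e he), trace_conj_diag _ (evmat_unit e he)]
  rw [Complex.ofReal_sum]
  exact Finset.sum_congr rfl fun i _ => by push_cast; ring

end Spec

lemma sum4_comm {n m : ℕ} (F : Fin n → Fin m → Fin n → Fin m → ℝ) :
    ∑ i, ∑ j, ∑ k, ∑ l, F i j k l = ∑ k, ∑ l, ∑ i, ∑ j, F i j k l := by
  calc ∑ i, ∑ j, ∑ k, ∑ l, F i j k l
      = ∑ i, ∑ k, ∑ j, ∑ l, F i j k l := by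
        exact Finset.sum_congr rfl fun i _ => Finset.sum_comm
    _ = ∑ k, ∑ i, ∑ j, ∑ l, F i j k l := Finset.sum_comm
    _ = ∑ k, ∑ i, ∑ l, ∑ j, F i j k l := by
        exact Finset.sum_congr rfl fun k _ =>
          Finset.sum_congr rfl fun i _ => Finset.sum_comm
    _ = ∑ k, ∑ l, ∑ i, ∑ j, F i j k l := by
        exact Finset.sum_congr rfl fun k _ => Finset.sum_comm

lemma final_arith {n m : ℕ} (pp εv ε'v : Fin n → ℝ) (rr qv : Fin m → ℝ)
    (N : (Fin n × Fin m) → (Fin n × Fin m) → ℝ)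
    (hp : ∑ i, pp i = 1) (hr : ∑ j, rr j = 1) (hN : ∀ v, ∑ u, N u v = 1) :
    ∑ i, ∑ j, ∑ k, ∑ l, (pp i * rr j * N (k, l) (i, j)) * ((ε'v k + qv l) - (εv i + qv j))
      = (∑ u, ∑ v, (ε'v u.1 + qv u.2) * (pp v.1 * rr v.2) * N u v)
        - ∑ i, εv i * pp i - ∑ j, qv j * rr j := by
  simp only [Fintype.sum_prod_type]
  have hN' : ∀ (i : Fin n) (j : Fin m), ∑ k, ∑ l, N (k, l) (i, j) = 1 := by
    intro i j
    have h := hN (i, j)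
    rwa [Fintype.sum_prod_type] at h
  have hstep : ∀ (i : Fin n) (j : Fin m),
      ∑ k, ∑ l, (pp i * rr j * N (k, l) (i, j)) * ((ε'v k + qv l) - (εv i + qv j))
        = (∑ k, ∑ l, (ε'v k + qv l) * (pp i * rr j) * N (k, l) (i, j))
          - (pp i * rr j) * (εv i + qv j) := by
    intro i j
    have e1 : ∑ k, ∑ l, (pp i * rr j * N (k, l) (i, j)) * ((ε'v k + qv l) - (εv i + qv j))
        = ∑ k, ∑ l, ((ε'v k + qv l) * (pp i * rr j) * N (k, l) (i, j)
            - ((pp i * rr j) * (εv i + qv j)) * N (k, l) (i, j)) := by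
      refine Finset.sum_congr rfl fun k _ => Finset.sum_congr rfl fun l _ => ?_
      ring
    rw [e1]
    have e2 : ∑ k, ∑ l, ((ε'v k + qv l) * (pp i * rr j) * N (k, l) (i, j)
          - ((pp i * rr j) * (εv i + qv j)) * N (k, l) (i, j))
        = (∑ k, ∑ l, (ε'v k + qv l) * (pp i * rr j) * N (k, l) (i, j))
          - ∑ k, ∑ l, ((pp i * rr j) * (εv i + qv j)) * N (k, l) (i, j) := by
      rw [← Finset.sum_sub_distrib]
      exact Finset.sum_congr rfl fun k _ => Finset.sum_sub_distrib _ _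
    rw [e2]
    congr 1
    have e3 : ∑ k, ∑ l, ((pp i * rr j) * (εv i + qv j)) * N (k, l) (i, j)
        = ((pp i * rr j) * (εv i + qv j)) * ∑ k, ∑ l, N (k, l) (i, j) := by
      rw [Finset.mul_sum]
      exact Finset.sum_congr rfl fun k _ => (Finset.mul_sum _ _ _).symm
    rw [e3, hN' i j, mul_one]
  calc ∑ i, ∑ j, ∑ k, ∑ l, (pp i * rr j * N (k, l) (i, j)) * ((ε'v k + qv l) - (εv i + qv j))
      = ∑ i, ∑ j, ((∑ k, ∑ l, (ε'v k + qv l) * (pp i * rr j) * N (k, l) (i, j))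
          - (pp i * rr j) * (εv i + qv j)) :=
        Finset.sum_congr rfl fun i _ => Finset.sum_congr rfl fun j _ => hstep i j
    _ = (∑ i, ∑ j, ∑ k, ∑ l, (ε'v k + qv l) * (pp i * rr j) * N (k, l) (i, j))
          - ∑ i, ∑ j, (pp i * rr j) * (εv i + qv j) := by
        rw [← Finset.sum_sub_distrib]
        exact Finset.sum_congr rfl fun i _ => Finset.sum_sub_distrib _ _
    _ = (∑ k, ∑ l, ∑ i, ∑ j, (ε'v k + qv l) * (pp i * rr j) * N (k, l) (i, j))
          - ((∑ i, εv i * pp i) + ∑ j, qv j * rr j) := by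
        rw [sum4_comm]
        congr 1
        have key : ∀ i, ∑ j, (pp i * rr j) * (εv i + qv j)
            = (εv i * pp i) * (∑ j, rr j) + pp i * (∑ j, qv j * rr j) := by
          intro i
          rw [Finset.mul_sum, Finset.mul_sum, ← Finset.sum_add_distrib]
          refine Finset.sum_congr rfl fun j _ => ?_
          ring
        rw [Finset.sum_congr rfl fun i _ => key i, Finset.sum_add_distrib]
        simp only [hr, mul_one]
        rw [← Finset.sum_mul, hp, one_mul]
    _ = _ := by ring

theorem ttm_exact_work_average
    (n m : ℕ) (hn : 1 ≤ n) (hm : 1 ≤ m)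
    (β : ℝ) (hβ : 0 < β)
    (HS0 HSt : Matrix (Fin n) (Fin n) ℂ)
    (hHS0 : HS0.IsHermitian) (hHSt : HSt.IsHermitian)
    (HB : Matrix (Fin m) (Fin m) ℂ) (hHB : HB.IsHermitian)
    (e : Fin n → Fin n → ℂ) (ε : Fin n → ℝ)
    (he : ∀ i i', ∑ x, (starRingEnd ℂ) (e i x) * e i' x = if i = i' then 1 else 0)
    (heig : ∀ i, HS0 *ᵥ e i = (ε i : ℂ) • e i)
    (e' : Fin n → Fin n → ℂ) (ε' : Fin n → ℝ)
    (he' : ∀ k k', ∑ x, (starRingEnd ℂ) (e' k x) * e' k' x = if k = k' then 1 else 0)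
    (heig' : ∀ k, HSt *ᵥ e' k = (ε' k : ℂ) • e' k)
    (f : Fin m → Fin m → ℂ) (q : Fin m → ℝ)
    (hf : ∀ j j', ∑ x, (starRingEnd ℂ) (f j x) * f j' x = if j = j' then 1 else 0)
    (hfeig : ∀ j, HB *ᵥ f j = (q j : ℂ) • f j)
    (U : Matrix (Fin n × Fin m) (Fin n × Fin m) ℂ)
    (hU : U ∈ Matrix.unitaryGroup (Fin n × Fin m) ℂ)
    (P : Fin n → Fin m → Fin n → Fin m → ℝ)
    (hP : ∀ i j k l, P i j k l = (Real.exp (-(β * ε i)) / Zpart β HS0)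
      * (Real.exp (-(β * q j)) / Zpart β HB)
      * (‖∑ x, (starRingEnd ℂ) (e' k x.1 * f l x.2)
          * (U *ᵥ fun y : Fin n × Fin m => e i y.1 * f j y.2) x‖) ^ 2)
    (Wv : Fin n → Fin m → Fin n → Fin m → ℝ)
    (hWv : ∀ i j k l, Wv i j k l = (ε' k + q l) - (ε i + q j)) :
    ∑ i, ∑ j, ∑ k, ∑ l, P i j k l * Wv i j k l
      = ((((HSt ⊗ₖ (1 : Matrix (Fin m) (Fin m) ℂ))
            + ((1 : Matrix (Fin n) (Fin n) ℂ) ⊗ₖ HB))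
          * (U * (gibbs β HS0 ⊗ₖ gibbs β HB) * Uᴴ)).trace).re
        - ((HS0 * gibbs β HS0).trace).re - ((HB * gibbs β HB).trace).re := by
  have hUU : Uᴴ * U = 1 := by
    have h := hU.1
    rwa [Matrix.star_eq_conjTranspose] at h
  set A : Matrix (Fin n × Fin m) (Fin n × Fin m) ℂ :=
    (evmat e' ⊗ₖ evmat f)ᴴ * U * (evmat e ⊗ₖ evmat f) with hAdef
  -- unitarity of the two kronecker eigenbases
  have hW1 : (evmat e' ⊗ₖ evmat f)ᴴ * (evmat e' ⊗ₖ evmat f) = 1 := by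
    rw [kron_conjT, ← Matrix.mul_kronecker_mul, evmat_unit e' he', evmat_unit f hf,
      Matrix.one_kronecker_one]
  have hW1' : (evmat e' ⊗ₖ evmat f) * (evmat e' ⊗ₖ evmat f)ᴴ = 1 :=
    mul_eq_one_comm.mp hW1
  have hW'1 : (evmat e ⊗ₖ evmat f)ᴴ * (evmat e ⊗ₖ evmat f) = 1 := by
    rw [kron_conjT, ← Matrix.mul_kronecker_mul, evmat_unit e he, evmat_unit f hf,
      Matrix.one_kronecker_one]
  -- A is unitary (in the relevant direction)
  have hAA : Aᴴ * A = 1 := by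
    have hAct : Aᴴ = (evmat e ⊗ₖ evmat f)ᴴ * (Uᴴ * (evmat e' ⊗ₖ evmat f)) := by
      rw [hAdef]
      simp only [Matrix.conjTranspose_mul, Matrix.conjTranspose_conjTranspose, mul_assoc]
    have h5 : Aᴴ * A = (evmat e ⊗ₖ evmat f)ᴴ * Uᴴ
        * ((evmat e' ⊗ₖ evmat f) * (evmat e' ⊗ₖ evmat f)ᴴ) * U * (evmat e ⊗ₖ evmat f) := by
      rw [hAct, hAdef]
      simp only [mul_assoc]
    rw [h5, hW1', Matrix.mul_one]
    have h6 : (evmat e ⊗ₖ evmat f)ᴴ * Uᴴ * U * (evmat e ⊗ₖ evmat f)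
        = (evmat e ⊗ₖ evmat f)ᴴ * (Uᴴ * U) * (evmat e ⊗ₖ evmat f) := by
      simp only [mul_assoc]
    rw [h6, hUU, Matrix.mul_one, hW'1]
  have hN1 : ∀ v, ∑ u, Complex.normSq (A u v) = 1 := by
    intro v
    have h : ∑ u, Aᴴ v u * A u v = 1 := by
      have h0 : (Aᴴ * A) v v = (1 : Matrix (Fin n × Fin m) (Fin n × Fin m) ℂ) v v := by
        rw [hAA]
      rwa [Matrix.mul_apply, Matrix.one_apply_eq] at h0
    have h2 : ∑ u, ((Complex.normSq (A u v) : ℝ) : ℂ) = 1 := by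
      rw [← h]
      refine Finset.sum_congr rfl fun u _ => ?_
      rw [Matrix.conjTranspose_apply, Complex.star_def, mul_comm, Complex.mul_conj]
    rw [← Complex.ofReal_sum] at h2
    exact_mod_cast h2
  -- partition functions
  have hZS : Zpart β HS0 = ∑ i, Real.exp (-(β * ε i)) := Zpart_eq β HS0 e ε he heig
  have hZB : Zpart β HB = ∑ j, Real.exp (-(β * q j)) := Zpart_eq β HB f q hf hfeig
  have hZSpos : 0 < Zpart β HS0 := by
    rw [hZS]
    haveI : Nonempty (Fin n) := Fin.pos_iff_nonempty.mp hn
    exact Finset.sum_pos (fun i _ => Real.exp_pos _) Finset.univ_nonempty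
  have hZBpos : 0 < Zpart β HB := by
    rw [hZB]
    haveI : Nonempty (Fin m) := Fin.pos_iff_nonempty.mp hm
    exact Finset.sum_pos (fun j _ => Real.exp_pos _) Finset.univ_nonempty
  have hp1 : ∑ i, Real.exp (-(β * ε i)) / Zpart β HS0 = 1 := by
    rw [← Finset.sum_div, ← hZS, div_self (ne_of_gt hZSpos)]
  have hr1 : ∑ j, Real.exp (-(β * q j)) / Zpart β HB = 1 := by
    rw [← Finset.sum_div, ← hZB, div_self (ne_of_gt hZBpos)]
  -- representation of the identity matrices
  have hdiag_one_n : Matrix.diagonal (fun _ : Fin n => (1 : ℂ)) = 1 := by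
    ext a b
    by_cases hab : a = b <;> simp [hab, Matrix.diagonal_apply, Matrix.one_apply]
  have hdiag_one_m : Matrix.diagonal (fun _ : Fin m => (1 : ℂ)) = 1 := by
    ext a b
    by_cases hab : a = b <;> simp [hab, Matrix.diagonal_apply, Matrix.one_apply]
  have h1n : (1 : Matrix (Fin n) (Fin n) ℂ)
      = evmat e' * Matrix.diagonal (fun _ : Fin n => (1 : ℂ)) * (evmat e')ᴴ := by
    rw [hdiag_one_n, Matrix.mul_one, evmat_unit' e' he']
  have h1m : (1 : Matrix (Fin m) (Fin m) ℂ)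
      = evmat f * Matrix.diagonal (fun _ : Fin m => (1 : ℂ)) * (evmat f)ᴴ := by
    rw [hdiag_one_m, Matrix.mul_one, evmat_unit' f hf]
  -- spectral representation of the "measured" observable
  have hGrep : HSt ⊗ₖ (1 : Matrix (Fin m) (Fin m) ℂ)
        + (1 : Matrix (Fin n) (Fin n) ℂ) ⊗ₖ HB
      = (evmat e' ⊗ₖ evmat f)
        * Matrix.diagonal (fun u : Fin n × Fin m => ((ε' u.1 + q u.2 : ℝ) : ℂ))
        * (evmat e' ⊗ₖ evmat f)ᴴ := by
    conv_lhs => rw [spectral_rep HSt e' ε' he' heig', spectral_rep HB f q hf hfeig, h1m, h1n]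
    rw [kron_conj_diag, kron_conj_diag, ← Matrix.add_mul, ← Matrix.mul_add]
    have hdadd : Matrix.diagonal (fun u : Fin n × Fin m => (ε' u.1 : ℂ) * 1)
          + Matrix.diagonal (fun u : Fin n × Fin m => (1 : ℂ) * (q u.2 : ℂ))
        = Matrix.diagonal (fun u : Fin n × Fin m => ((ε' u.1 + q u.2 : ℝ) : ℂ)) := by
      rw [Matrix.diagonal_add]
      congr 1
      funext u
      push_cast
      ring
    rw [hdadd]
  -- spectral representation of the initial state
  have hσrep : gibbs β HS0 ⊗ₖ gibbs β HB
      = (evmat e ⊗ₖ evmat f)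
        * Matrix.diagonal (fun v : Fin n × Fin m =>
            ((Real.exp (-(β * ε v.1)) / Zpart β HS0 : ℝ) : ℂ)
              * ((Real.exp (-(β * q v.2)) / Zpart β HB : ℝ) : ℂ))
        * (evmat e ⊗ₖ evmat f)ᴴ := by
    rw [gibbs_rep β HS0 e ε he heig, gibbs_rep β HB f q hf hfeig, kron_conj_diag]
  -- entries of A are the transition amplitudes
  have hAw : ∀ (i : Fin n) (j : Fin m) (k : Fin n) (l : Fin m),
      (∑ x, (starRingEnd ℂ) (e' k x.1 * f l x.2)
          * (U *ᵥ fun y : Fin n × Fin m => e i y.1 * f j y.2) x)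
        = A (k, l) (i, j) := by
    intro i j k l
    rw [hAdef]
    simp only [Matrix.mul_apply, Matrix.conjTranspose_apply, Matrix.kroneckerMap_apply, evmat,
      Matrix.of_apply, Matrix.mulVec, dotProduct, Finset.sum_mul, Finset.mul_sum]
    conv_rhs => rw [Finset.sum_comm]
    refine Finset.sum_congr rfl fun x _ => Finset.sum_congr rfl fun y _ => ?_
    simp only [← Complex.star_def, star_mul']
    ring
  -- the three trace terms
  have hT2 : ((HS0 * gibbs β HS0).trace).re
      = ∑ i, ε i * (Real.exp (-(β * ε i)) / Zpart β HS0) := by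
    rw [trace_H_gibbs β HS0 e ε he heig, Complex.ofReal_re]
  have hT3 : ((HB * gibbs β HB).trace).re
      = ∑ j, q j * (Real.exp (-(β * q j)) / Zpart β HB) := by
    rw [trace_H_gibbs β HB f q hf hfeig, Complex.ofReal_re]
  have hT1 : (((HSt ⊗ₖ (1 : Matrix (Fin m) (Fin m) ℂ))
          + ((1 : Matrix (Fin n) (Fin n) ℂ) ⊗ₖ HB))
        * (U * (gibbs β HS0 ⊗ₖ gibbs β HB) * Uᴴ)).trace
      = ((∑ u : Fin n × Fin m, ∑ v : Fin n × Fin m,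
          (ε' u.1 + q u.2) * ((Real.exp (-(β * ε v.1)) / Zpart β HS0)
            * (Real.exp (-(β * q v.2)) / Zpart β HB)) * Complex.normSq (A u v) : ℝ) : ℂ) := by
    rw [hGrep, hσrep, key_trace, ← hAdef]
    rw [Complex.ofReal_sum]
    refine Finset.sum_congr rfl fun u _ => ?_
    rw [Complex.ofReal_sum]
    refine Finset.sum_congr rfl fun v _ => ?_
    rw [Complex.mul_conj]
    push_cast
    ring
  -- rewrite the left-hand side
  have hLHS : ∑ i, ∑ j, ∑ k, ∑ l, P i j k l * Wv i j k l
      = ∑ i, ∑ j, ∑ k, ∑ l,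
          ((Real.exp (-(β * ε i)) / Zpart β HS0) * (Real.exp (-(β * q j)) / Zpart β HB)
            * Complex.normSq (A (k, l) (i, j)))
          * ((ε' k + q l) - (ε i + q j)) := by
    refine Finset.sum_congr rfl fun i _ => Finset.sum_congr rfl fun j _ =>
      Finset.sum_congr rfl fun k _ => Finset.sum_congr rfl fun l _ => ?_
    rw [hP i j k l, hWv i j k l, hAw i j k l, Complex.sq_norm]
  rw [hLHS, hT1, Complex.ofReal_re, hT2, hT3]
  exact final_arith (fun i => Real.exp (-(β * ε i)) / Zpart β HS0) ε ε'
    (fun j => Real.exp (-(β * q j)) / Zpart β HB) q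
    (fun u v => Complex.normSq (A u v)) hp1 hr1 hN1
end
end
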